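/- For every n ≥ 1 and every ξ ∈ ℂ with |ξ − z₁| = ρ₁, one has conj(q₁,ₙ(ξ)) = κ₂,ₙ₊₁/(ξ − z₁,ₙ) − conj(α₁,ₙ); equivalently, conj(κ₁,ₙ)/conj(ξ − z₂,ₙ₋₁) = −2·conj(α₁,ₙ) + κ₂,ₙ₊₁/(ξ − z₁,ₙ). -/

import Mathlib

/-!
On the circle `‖ξ - c‖ = r` we have `conj (ξ - c) = r ^ 2 / (ξ - c)`, so the conjugate of a simple
pole `K / (ξ - p)` is a constant plus a simple pole at the inverse point of `p`, with residue
`-conj K * r ^ 2 / conj (p - c) ^ 2`. For `c = z₁`, `r = ρ₁`, `p = z₂,ₙ₋₁` the inverse point is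
`z₁,ₙ`, the constant is `-2 conj α₁,ₙ`, and the `κ`-recurrences are exactly what makes the residue
equal to `κ₂,ₙ₊₁`. The `λ`-recurrence keeps `λ₁,ₙ ≥ 1 - ρ₂ / ρ > ρ₁ / ρ`, so `z₂,ₙ₋₁` stays outside
the circle and no denominator vanishes.
-/

open ComplexConjugate EuclideanGeometry

theorem EuclideanGeometry.inversion_add_smul {E : Type*} [NormedAddCommGroup E]
    [InnerProductSpace ℝ E] (c w : E) (R t : ℝ) :
    inversion c R (c + t • w) = c + ((R / ‖w‖) ^ 2 / t) • w := by
  rw [inversion, dist_eq_norm, add_sub_cancel_left, norm_smul, Real.norm_eq_abs, vsub_eq_sub,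
    add_sub_cancel_left, vadd_eq_add, smul_smul, add_comm]
  congr 2
  rcases eq_or_ne t 0 with rfl | ht
  · simp
  rw [div_pow, mul_pow, sq_abs]
  field_simp

theorem Complex.inversion_eq_add_div_conj (c p : ℂ) (r : ℝ) :
    inversion c r p = c + r ^ 2 / conj (p - c) := by
  rcases eq_or_ne p c with rfl | hpc
  · simp
  have hpc' : p - c ≠ 0 := sub_ne_zero.mpr hpc
  have hn : (‖p - c‖ : ℂ) ≠ 0 := by simpa using hpc'
  rw [inversion, Complex.dist_eq, vsub_eq_sub, vadd_eq_add, Complex.real_smul, add_comm c]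
  congr 1
  rw [eq_div_iff ((map_ne_zero _).mpr hpc'), mul_assoc, Complex.mul_conj']
  push_cast
  field_simp

theorem Complex.conj_div_sub_eq_of_norm_eq {c p ξ : ℂ} {r : ℝ} (K : ℂ) (hξ : ‖ξ - c‖ = r)
    (hr : 0 < r) (hp : r < ‖p - c‖) :
    conj (K / (ξ - p)) =
      conj K / conj (c - p) - conj K * r ^ 2 / conj (p - c) ^ 2 / (ξ - inversion c r p) := by
  have hu : ξ - c ≠ 0 := norm_ne_zero_iff.mp (hξ ▸ hr.ne')
  have hv : conj (p - c) ≠ 0 := (map_ne_zero _).mpr (norm_pos_iff.mp (hr.trans hp))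
  have huv : (ξ - c) * conj (p - c) - r ^ 2 ≠ 0 := by
    rw [sub_ne_zero]
    apply_fun (‖·‖)
    rw [norm_mul, Complex.norm_conj, hξ, norm_pow, Complex.norm_real, Real.norm_of_nonneg hr.le]
    nlinarith
  have hconj : conj (ξ - c) = r ^ 2 / (ξ - c) :=
    eq_div_of_mul_eq hu (by rw [Complex.conj_mul', hξ])
  rw [Complex.inversion_eq_add_div_conj, map_div₀, show ξ - p = (ξ - c) - (p - c) by ring,
    show c - p = -(p - c) by ring, show ∀ x, ξ - (c + x) = (ξ - c) - x from fun x => by ring,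
    map_sub, map_neg, hconj]
  generalize ξ - c = u at *
  generalize conj (p - c) = v at *
  have huv' : r ^ 2 - u * v ≠ 0 := by rwa [← neg_sub, neg_ne_zero]
  field_simp
  ring

theorem sq_div_le_self {b x : ℝ} (hb : 0 ≤ b) (hbx : b ≤ x) : b ^ 2 / x ≤ b :=
  div_le_of_le_mul₀ (hb.trans hbx) hb (by nlinarith)

theorem one_sub_le_of_coupled_recurrence {a b : ℝ} (ha : 0 ≤ a) (hb : 0 ≤ b) (hab : a + b < 1)
    {l₁ l₂ : ℕ → ℝ} (hl₁0 : l₁ 0 = 1) (hl₂0 : l₂ 0 = 1)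
    (hl₁ : ∀ n, l₁ (n + 1) = 1 - b ^ 2 / l₂ n) (hl₂ : ∀ n, l₂ (n + 1) = 1 - a ^ 2 / l₁ n) :
    ∀ n, 1 - b ≤ l₁ n ∧ 1 - a ≤ l₂ n
  | 0 => by rw [hl₁0, hl₂0]; constructor <;> linarith
  | n + 1 => by
    obtain ⟨h₁, h₂⟩ := one_sub_le_of_coupled_recurrence ha hb hab hl₁0 hl₂0 hl₁ hl₂ n
    rw [hl₁, hl₂]
    exact ⟨by linarith [sq_div_le_self hb (by linarith : b ≤ l₂ n)],
      by linarith [sq_div_le_self ha (by linarith : a ≤ l₁ n)]⟩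

theorem kappa₂_add_two_eq_neg_conj_kappa₁ {z₁ z₂ : ℂ} {ρ₁ ρ₂ Λ₁ Λ₂ : ℝ}
    (hΛ₁ : Λ₁ = (ρ₁ / ‖z₁ - z₂‖) ^ 2) (hΛ₂ : Λ₂ = (ρ₂ / ‖z₁ - z₂‖) ^ 2)
    {l₁ l₂ : ℕ → ℝ} (hl₁0 : l₁ 0 = 1) (hl₂0 : l₂ 0 = 1) {κ₁ κ₂ : ℕ → ℂ}
    (hκ₁1 : κ₁ 1 = ((2 * ρ₂ ^ 2 : ℝ) : ℂ))
    (hκ₁2 : κ₁ 2 = -(2 * (((ρ₁ * ρ₂ : ℝ)) : ℂ) ^ 2) / (starRingEnd ℂ (z₂ - z₁)) ^ 2)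
    (hκ₁rec : ∀ n : ℕ, 1 ≤ n →
      κ₁ (n + 2) = ((Λ₁ * Λ₂ / (l₂ n * l₁ (n - 1)) ^ 2 : ℝ) : ℂ) * κ₁ n)
    (hκ₂1 : κ₂ 1 = ((2 * ρ₁ ^ 2 : ℝ) : ℂ))
    (hκ₂2 : κ₂ 2 = -(2 * (((ρ₁ * ρ₂ : ℝ)) : ℂ) ^ 2) / (starRingEnd ℂ (z₁ - z₂)) ^ 2)
    (hκ₂rec : ∀ n : ℕ, 1 ≤ n →
      κ₂ (n + 2) = ((Λ₁ * Λ₂ / (l₁ n * l₂ (n - 1)) ^ 2 : ℝ) : ℂ) * κ₂ n)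
    (m : ℕ) :
    κ₂ (m + 2) = -ρ₁ ^ 2 * conj (κ₁ (m + 1)) / (l₁ m * conj (z₁ - z₂)) ^ 2 := by
  induction m using Nat.twoStepInduction with
  | zero =>
    rw [hκ₂2, hκ₁1, hl₁0]
    simp only [Complex.conj_ofReal]
    push_cast
    ring
  | one =>
    rw [hκ₂rec 1 le_rfl, hκ₂1, hκ₁2, hl₂0, hΛ₁, hΛ₂]
    have hw : ((z₂ - z₁) ^ 2)⁻¹ * (conj (z₁ - z₂) ^ 2)⁻¹ = ((‖z₁ - z₂‖ : ℂ) ^ 4)⁻¹ := by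
      rw [← mul_inv, show (z₂ - z₁) ^ 2 = (z₁ - z₂) ^ 2 by ring, ← mul_pow, Complex.mul_conj']
      ring
    simp only [map_div₀, map_neg, map_mul, map_pow, Complex.conj_conj, Complex.conj_ofReal,
      map_ofNat]
    push_cast
    linear_combination (-2 * (ρ₁ : ℂ) ^ 4 * ρ₂ ^ 2 / l₁ 1 ^ 2) * hw
  | more m ih _ =>
    rw [hκ₂rec (m + 2) (by omega), ih, hκ₁rec (m + 1) (by omega)]
    simp only [Nat.add_sub_cancel, map_mul, Complex.conj_ofReal]
    push_cast
    ring

theorem conj_density_identity_on_circle_general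
    (z₁ z₂ : ℂ) (ρ ρ₁ ρ₂ : ℝ)
    (hρ : ρ = ‖z₁ - z₂‖)
    (hρ₁ : 0 < ρ₁) (hρ₂ : 0 < ρ₂) (hsum : ρ₁ + ρ₂ < ρ)
    (Λ₁ Λ₂ : ℝ) (hΛ₁ : Λ₁ = (ρ₁ / ρ) ^ 2) (hΛ₂ : Λ₂ = (ρ₂ / ρ) ^ 2)
    (l₁ l₂ : ℕ → ℝ) (hl₁0 : l₁ 0 = 1) (hl₂0 : l₂ 0 = 1)
    (hl₁ : ∀ n : ℕ, l₁ (n + 1) = 1 - Λ₂ / l₂ n)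
    (hl₂ : ∀ n : ℕ, l₂ (n + 1) = 1 - Λ₁ / l₁ n)
    (κ₁ κ₂ : ℕ → ℂ)
    (hκ₁1 : κ₁ 1 = ((2 * ρ₂ ^ 2 : ℝ) : ℂ))
    (hκ₁2 : κ₁ 2 = -(2 * (((ρ₁ * ρ₂ : ℝ)) : ℂ) ^ 2) / (starRingEnd ℂ (z₂ - z₁)) ^ 2)
    (hκ₁rec : ∀ n : ℕ, 1 ≤ n →
      κ₁ (n + 2) = ((Λ₁ * Λ₂ / (l₂ n * l₁ (n - 1)) ^ 2 : ℝ) : ℂ) * κ₁ n)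
    (hκ₂1 : κ₂ 1 = ((2 * ρ₁ ^ 2 : ℝ) : ℂ))
    (hκ₂2 : κ₂ 2 = -(2 * (((ρ₁ * ρ₂ : ℝ)) : ℂ) ^ 2) / (starRingEnd ℂ (z₁ - z₂)) ^ 2)
    (hκ₂rec : ∀ n : ℕ, 1 ≤ n →
      κ₂ (n + 2) = ((Λ₁ * Λ₂ / (l₁ n * l₂ (n - 1)) ^ 2 : ℝ) : ℂ) * κ₂ n)
    (z1s z2s : ℕ → ℂ)
    (hz1s : ∀ n : ℕ, z1s n = ((1 - l₂ n : ℝ) : ℂ) * z₂ + ((l₂ n : ℝ) : ℂ) * z₁)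
    (hz2s : ∀ n : ℕ, z2s n = ((1 - l₁ n : ℝ) : ℂ) * z₁ + ((l₁ n : ℝ) : ℂ) * z₂)
    (α₁ : ℕ → ℂ)
    (hα₁ : ∀ n : ℕ, 1 ≤ n →
      α₁ n = -κ₁ n / (2 * ((l₁ (n - 1) : ℝ) : ℂ) * (z₁ - z₂)))
    (q₁ : ℕ → ℂ → ℂ)
    (hq₁ : ∀ n : ℕ, 1 ≤ n → ∀ z : ℂ, q₁ n z = κ₁ n / (z - z2s (n - 1)) + α₁ n)
    :
    ∀ n : ℕ, 1 ≤ n → ∀ ξ : ℂ, ‖ξ - z₁‖ = ρ₁ →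
      starRingEnd ℂ (q₁ n ξ) = κ₂ (n + 1) / (ξ - z1s n) - starRingEnd ℂ (α₁ n) ∧
      starRingEnd ℂ (κ₁ n) / starRingEnd ℂ (ξ - z2s (n - 1)) =
        -2 * starRingEnd ℂ (α₁ n) + κ₂ (n + 1) / (ξ - z1s n) := by
  subst hρ
  intro n hn ξ hξ
  obtain ⟨m, rfl⟩ := Nat.exists_eq_add_of_le' hn
  have hρ : 0 < ‖z₁ - z₂‖ := by linarith
  have hl : ρ₁ / ‖z₁ - z₂‖ < l₁ m := by
    have hab : ρ₁ / ‖z₁ - z₂‖ + ρ₂ / ‖z₁ - z₂‖ < 1 := by rwa [← add_div, div_lt_one hρ]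
    linarith [(one_sub_le_of_coupled_recurrence (by positivity) (by positivity) hab hl₁0 hl₂0
      (hΛ₂ ▸ hl₁) (hΛ₁ ▸ hl₂) m).1]
  have hL : 0 < l₁ m := (div_pos hρ₁ hρ).trans hl
  have hp : z2s m = z₁ + (-l₁ m) • (z₁ - z₂) := by rw [hz2s, Complex.real_smul]; push_cast; ring
  have hpn : ρ₁ < ‖z2s m - z₁‖ := by
    rw [hp, add_sub_cancel_left, norm_smul, norm_neg, Real.norm_of_nonneg hL.le]
    rwa [div_lt_iff₀ hρ] at hl
  have hinv : inversion z₁ ρ₁ (z2s m) = z1s (m + 1) := by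
    rw [hp, inversion_add_smul, hz1s, hl₂, hΛ₁, Complex.real_smul]
    push_cast
    ring
  have hκ : κ₂ (m + 1 + 1) = -(conj (κ₁ (m + 1)) * ρ₁ ^ 2 / conj (z2s m - z₁) ^ 2) := by
    rw [kappa₂_add_two_eq_neg_conj_kappa₁ hΛ₁ hΛ₂ hl₁0 hl₂0 hκ₁1 hκ₁2 hκ₁rec hκ₂1 hκ₂2 hκ₂rec m,
      hp, add_sub_cancel_left, Complex.real_smul]
    simp only [map_mul, Complex.conj_ofReal]
    push_cast
    ring
  have hα : -2 * conj (α₁ (m + 1)) = conj (κ₁ (m + 1)) / conj (z₁ - z2s m) := by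
    rw [hα₁ (m + 1) le_add_self, Nat.add_sub_cancel, hp, sub_add_cancel_left, Complex.real_smul]
    simp only [map_neg, map_div₀, map_mul, Complex.conj_ofReal, map_ofNat]
    push_cast
    ring
  have key := Complex.conj_div_sub_eq_of_norm_eq (κ₁ (m + 1)) hξ hρ₁ hpn
  rw [hinv, ← hα, map_div₀] at key
  have hconj : conj (κ₁ (m + 1)) / conj (ξ - z2s m) =
      -2 * conj (α₁ (m + 1)) + κ₂ (m + 1 + 1) / (ξ - z1s (m + 1)) := by
    rw [key, hκ]
    ring
  refine ⟨?_, hconj⟩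
  rw [hq₁ (m + 1) le_add_self ξ, Nat.add_sub_cancel, map_add, map_div₀, hconj]
  ring

theorem conj_density_identity_on_circle
    (z₁ z₂ : ℂ) (hz : z₁ ≠ z₂) (ρ ρ₁ ρ₂ : ℝ)
    (hρ : ρ = ‖z₁ - z₂‖)
    (hρ₁ : 0 < ρ₁) (hρ₂ : 0 < ρ₂) (hsum : ρ₁ + ρ₂ < ρ)
    (Λ₁ Λ₂ Λ : ℝ) (hΛ₁ : Λ₁ = (ρ₁ / ρ) ^ 2) (hΛ₂ : Λ₂ = (ρ₂ / ρ) ^ 2)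
    (hΛ : Λ = (Λ₁ - Λ₂) ^ 2 + 1 - 2 * (Λ₁ + Λ₂))
    (l₁ l₂ : ℕ → ℝ) (hl₁0 : l₁ 0 = 1) (hl₂0 : l₂ 0 = 1)
    (hl₁ : ∀ n : ℕ, l₁ (n + 1) = 1 - Λ₂ / l₂ n)
    (hl₂ : ∀ n : ℕ, l₂ (n + 1) = 1 - Λ₁ / l₁ n)
    (κ₁ κ₂ : ℕ → ℂ)
    (hκ₁1 : κ₁ 1 = ((2 * ρ₂ ^ 2 : ℝ) : ℂ))
    (hκ₁2 : κ₁ 2 = -(2 * (((ρ₁ * ρ₂ : ℝ)) : ℂ) ^ 2) / (starRingEnd ℂ (z₂ - z₁)) ^ 2)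
    (hκ₁rec : ∀ n : ℕ, 1 ≤ n →
      κ₁ (n + 2) = ((Λ₁ * Λ₂ / (l₂ n * l₁ (n - 1)) ^ 2 : ℝ) : ℂ) * κ₁ n)
    (hκ₂1 : κ₂ 1 = ((2 * ρ₁ ^ 2 : ℝ) : ℂ))
    (hκ₂2 : κ₂ 2 = -(2 * (((ρ₁ * ρ₂ : ℝ)) : ℂ) ^ 2) / (starRingEnd ℂ (z₁ - z₂)) ^ 2)
    (hκ₂rec : ∀ n : ℕ, 1 ≤ n →
      κ₂ (n + 2) = ((Λ₁ * Λ₂ / (l₁ n * l₂ (n - 1)) ^ 2 : ℝ) : ℂ) * κ₂ n)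
    (z1s z2s : ℕ → ℂ)
    (hz1s : ∀ n : ℕ, z1s n = ((1 - l₂ n : ℝ) : ℂ) * z₂ + ((l₂ n : ℝ) : ℂ) * z₁)
    (hz2s : ∀ n : ℕ, z2s n = ((1 - l₁ n : ℝ) : ℂ) * z₁ + ((l₁ n : ℝ) : ℂ) * z₂)
    (α₁ : ℕ → ℂ)
    (hα₁ : ∀ n : ℕ, 1 ≤ n →
      α₁ n = -κ₁ n / (2 * ((l₁ (n - 1) : ℝ) : ℂ) * (z₁ - z₂)))
    (q₁ : ℕ → ℂ → ℂ)
    (hq₁0 : ∀ z : ℂ, q₁ 0 z = 2 * (z - z₁))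
    (hq₁ : ∀ n : ℕ, 1 ≤ n → ∀ z : ℂ, q₁ n z = κ₁ n / (z - z2s (n - 1)) + α₁ n)
    :
    ∀ n : ℕ, 1 ≤ n → ∀ ξ : ℂ, ‖ξ - z₁‖ = ρ₁ →
      starRingEnd ℂ (q₁ n ξ) = κ₂ (n + 1) / (ξ - z1s n) - starRingEnd ℂ (α₁ n) ∧
      starRingEnd ℂ (κ₁ n) / starRingEnd ℂ (ξ - z2s (n - 1)) =
        -2 * starRingEnd ℂ (α₁ n) + κ₂ (n + 1) / (ξ - z1s n) :=
  conj_density_identity_on_circle_general z₁ z₂ ρ ρ₁ ρ₂ hρ hρ₁ hρ₂ hsum Λ₁ Λ₂ hΛ₁ hΛ₂ l₁ l₂ hl₁0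
    hl₂0 hl₁ hl₂ κ₁ κ₂ hκ₁1 hκ₁2 hκ₁rec hκ₂1 hκ₂2 hκ₂rec z1s z2s hz1s hz2s α₁ hα₁ q₁ hq₁
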